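/- Let 0 < R ≤ 1, M ≥ 0, and let ρ_r be an even 2-periodic probability density. If σ² > 16R / ln 3, then the operator T has at most one fixed point among even 2-periodic probability densities: if ρ₁ and ρ₂ are even 2-periodic probability densities with T ρ₁ = ρ₁ and T ρ₂ = ρ₂ on [0,1], then ρ₁ = ρ₂ almost everywhere on [0,1]. -/

import Mathlib

open MeasureTheory Real

/-- The influence field `G_ρ(x) = ∫_{x-R}^{x+R} (x-y)(ρ(y) + M ρ_r(y)) dy`. -/
noncomputable def G (R M : ℝ) (ρ ρr : ℝ → ℝ) (x : ℝ) : ℝ :=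
  ∫ y in (x - R)..(x + R), (x - y) * (ρ y + M * ρr y)

/-- `f` is an even 2-periodic probability density. -/
def IsEvenPeriodicDensity (f : ℝ → ℝ) : Prop :=
  (∀ x, f (x + 2) = f x) ∧ (∀ x, f (-x) = f x) ∧ (∀ x, 0 ≤ f x) ∧
    (∫ x in (0:ℝ)..1, f x) = 1

/-- The operator `T`: `(T ρ)(x) = K⁻¹ exp(−(2/σ²) ∫₀ˣ G_ρ(z) dz)` with normalizing
constant `K = ∫₀¹ exp(−(2/σ²) ∫₀ˣ G_ρ(z) dz) dx`. -/
noncomputable def Tmap (R M σ : ℝ) (ρr ρ : ℝ → ℝ) (x : ℝ) : ℝ :=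
  Real.exp (-(2 / σ ^ 2) * ∫ z in (0:ℝ)..x, G R M ρ ρr z) /
    ∫ y in (0:ℝ)..1, Real.exp (-(2 / σ ^ 2) * ∫ z in (0:ℝ)..y, G R M ρ ρr z)

lemma per_intervalIntegrable {f : ℝ → ℝ} (hper : ∀ x, f (x + 2) = f x)
    (h02 : IntervalIntegrable f volume 0 2) :
    ∀ a b, IntervalIntegrable f volume a b := by
  have hper' : Function.Periodic f 2 := hper
  have key : ∀ n : ℤ, IntervalIntegrable f volume (2*n) (2*n+2) := by
    intro n
    have h := h02.comp_sub_right (2*n)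
    have heq : (fun x => f (x - 2*n)) = f := by
      funext x
      have h2 := hper'.sub_int_mul_eq (x := x) n
      rw [mul_comm (n:ℝ) 2] at h2
      exact h2
    rw [heq] at h
    convert h using 1 <;> ring
  have nat : ∀ n : ℕ, IntervalIntegrable f volume (-(2*n)) (2*n) := by
    intro n
    induction n with
    | zero => simp
    | succ m ih =>
      have h1 := key (-(m+1))
      have h2 := key m
      have h1' : IntervalIntegrable f volume (-(2*((m:ℝ)+1))) (-(2*m)) := by
        convert h1 using 1 <;> push_cast <;> ring
      have h2' : IntervalIntegrable f volume ((2*m:ℝ)) (2*((m:ℝ)+1)) := by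
        convert h2 using 1 <;> push_cast <;> ring
      have := (h1'.trans ih).trans h2'
      convert this using 1 <;> push_cast <;> ring
  intro a b
  obtain ⟨n, hn⟩ := exists_nat_ge (max |a| |b|)
  have hn2 : max |a| |b| ≤ 2*(n:ℝ) := by
    have : (0:ℝ) ≤ n := Nat.cast_nonneg n
    linarith
  have ha : a ∈ Set.uIcc (-(2*(n:ℝ))) (2*n) := by
    rw [Set.mem_uIcc]
    left
    have h1 : |a| ≤ 2*(n:ℝ) := le_trans (le_max_left _ _) hn2
    rw [abs_le] at h1
    exact ⟨by linarith [h1.1], h1.2⟩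
  have hb : b ∈ Set.uIcc (-(2*(n:ℝ))) (2*n) := by
    rw [Set.mem_uIcc]
    left
    have h1 : |b| ≤ 2*(n:ℝ) := le_trans (le_max_right _ _) hn2
    rw [abs_le] at h1
    exact ⟨by linarith [h1.1], h1.2⟩
  exact (nat n).mono_set (Set.uIcc_subset_uIcc ha hb)

lemma epd_intervalIntegrable {f : ℝ → ℝ} (hf : IsEvenPeriodicDensity f) :
    ∀ a b, IntervalIntegrable f volume a b := by
  obtain ⟨hper, heven, hpos, hint⟩ := hf
  have h01 : IntervalIntegrable f volume 0 1 := by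
    by_contra h
    rw [intervalIntegral.integral_undef h] at hint
    norm_num at hint
  have hneg : IntervalIntegrable f volume (-1) 0 := by
    have := (IntervalIntegrable.iff_comp_neg (a := 0) (b := 1) (f := f)).mp h01
    simp only [heven, neg_zero, neg_neg] at this
    exact this.symm
  have h12 : IntervalIntegrable f volume 1 2 := by
    have h := hneg.comp_sub_right 2
    have heq : (fun x => f (x - 2)) = f := by
      funext x
      rw [← hper (x - 2)]; ring_nf
    rw [heq] at h
    norm_num at h
    exact h
  exact per_intervalIntegrable hper ((h01.trans h12))

lemma per_shift_integral {g : ℝ → ℝ} (hper : ∀ x, g (x + 2) = g x) (z : ℝ) :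
    ∫ x in (z-1)..(z+1), g x = ∫ x in (-1:ℝ)..1, g x := by
  have hper' : Function.Periodic g 2 := hper
  have h := hper'.intervalIntegral_add_eq (z-1) (-1)
  norm_num at h
  convert h using 2 <;> ring

lemma even_split_integral {g : ℝ → ℝ} (heven : ∀ x, g (-x) = g x)
    (hint : ∀ a b, IntervalIntegrable g volume a b) :
    ∫ x in (-1:ℝ)..1, g x = 2 * ∫ x in (0:ℝ)..1, g x := by
  have h1 : ∫ x in (-1:ℝ)..0, g x = ∫ x in (0:ℝ)..1, g x := by
    have h := intervalIntegral.integral_comp_neg (a := (0:ℝ)) (b := 1) g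
    simp only [heven, neg_zero] at h
    exact h.symm
  have h2 := intervalIntegral.integral_add_adjacent_intervals (hint (-1) 0) (hint 0 1)
  linarith

lemma cont_moving {g : ℝ → ℝ} (hint : ∀ a b, IntervalIntegrable g volume a b) (R : ℝ) :
    Continuous (fun z => ∫ y in (z-R)..(z+R), g y) := by
  have hP : Continuous (fun t => ∫ y in (0:ℝ)..t, g y) :=
    intervalIntegral.continuous_primitive hint 0
  have heq : (fun z => ∫ y in (z-R)..(z+R), g y)
      = fun z => (∫ y in (0:ℝ)..(z+R), g y) - ∫ y in (0:ℝ)..(z-R), g y := by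
    funext z
    rw [eq_sub_iff_add_eq]
    rw [add_comm]
    exact intervalIntegral.integral_add_adjacent_intervals (hint 0 (z-R)) (hint (z-R) (z+R))
  rw [heq]
  exact (hP.comp (continuous_id.add continuous_const)).sub
    (hP.comp (continuous_id.sub continuous_const))

lemma G_continuous (R M : ℝ) (ρ ρr : ℝ → ℝ)
    (hρ : ∀ a b, IntervalIntegrable ρ volume a b)
    (hρr : ∀ a b, IntervalIntegrable ρr volume a b) :
    Continuous (G R M ρ ρr) := by
  set f' : ℝ → ℝ := fun y => ρ y + M * ρr y with hf'
  have hint : ∀ a b, IntervalIntegrable f' volume a b := fun a b =>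
    (hρ a b).add ((hρr a b).const_mul M)
  have hyint : ∀ a b, IntervalIntegrable (fun y => y * f' y) volume a b := fun a b =>
    (hint a b).continuousOn_mul continuousOn_id
  have heq : G R M ρ ρr = fun z =>
      z * (∫ y in (z-R)..(z+R), f' y) - ∫ y in (z-R)..(z+R), y * f' y := by
    funext z
    unfold G
    rw [← intervalIntegral.integral_const_mul,
      ← intervalIntegral.integral_sub ((hint _ _).const_mul z) (hyint _ _)]
    congr 1
    funext y
    ring
  rw [heq]
  exact (continuous_id.mul (cont_moving hint R)).sub (cont_moving hyint R)

lemma G_sub_bound (R M : ℝ) (hR : 0 < R) (hR1 : R ≤ 1) (ρ₁ ρ₂ ρr : ℝ → ℝ)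
    (hρ₁ : IsEvenPeriodicDensity ρ₁) (hρ₂ : IsEvenPeriodicDensity ρ₂)
    (hρr : IsEvenPeriodicDensity ρr) (z : ℝ) :
    |G R M ρ₁ ρr z - G R M ρ₂ ρr z| ≤ 2 * R * ∫ x in (0:ℝ)..1, |ρ₁ x - ρ₂ x| := by
  have h₁ := epd_intervalIntegrable hρ₁
  have h₂ := epd_intervalIntegrable hρ₂
  have hr := epd_intervalIntegrable hρr
  set Δ : ℝ → ℝ := fun y => ρ₁ y - ρ₂ y with hΔdef
  have hΔ : ∀ a b, IntervalIntegrable Δ volume a b := fun a b => (h₁ a b).sub (h₂ a b)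
  have hΔper : ∀ x, |Δ (x + 2)| = |Δ x| := by
    intro x; simp only [hΔdef, hρ₁.1, hρ₂.1]
  have hΔeven : ∀ x, |Δ (-x)| = |Δ x| := by
    intro x; simp only [hΔdef, hρ₁.2.1, hρ₂.2.1]
  have hcont : ContinuousOn (fun y => z - y) (Set.uIcc (z-R) (z+R)) :=
    (continuous_const.sub continuous_id).continuousOn
  have hi1 : IntervalIntegrable (fun y => (z-y) * Δ y) volume (z-R) (z+R) :=
    (hΔ _ _).continuousOn_mul hcont
  have hsub : G R M ρ₁ ρr z - G R M ρ₂ ρr z = ∫ y in (z-R)..(z+R), (z-y) * Δ y := by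
    unfold G
    rw [← intervalIntegral.integral_sub
      (((h₁ _ _).add ((hr _ _).const_mul M)).continuousOn_mul hcont)
      (((h₂ _ _).add ((hr _ _).const_mul M)).continuousOn_mul hcont)]
    congr 1
    funext y
    simp only [hΔdef]
    ring
  have hRR : z - R ≤ z + R := by linarith
  have step1 : |∫ y in (z-R)..(z+R), (z-y) * Δ y| ≤ ∫ y in (z-R)..(z+R), |(z-y) * Δ y| :=
    intervalIntegral.abs_integral_le_integral_abs hRR
  have step2 : ∫ y in (z-R)..(z+R), |(z-y) * Δ y| ≤ ∫ y in (z-R)..(z+R), R * |Δ y| := by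
    apply intervalIntegral.integral_mono_on hRR hi1.abs ((hΔ _ _).abs.const_mul R)
    intro y hy
    rw [abs_mul]
    apply mul_le_mul_of_nonneg_right _ (abs_nonneg _)
    rw [abs_le]
    constructor <;> [linarith [hy.1, hy.2]; linarith [hy.1, hy.2]]
  have step3 : ∫ y in (z-R)..(z+R), R * |Δ y| ≤ ∫ y in (z-1)..(z+1), R * |Δ y| := by
    apply intervalIntegral.integral_mono_interval (by linarith) hRR (by linarith)
    · filter_upwards with y
      positivity
    · exact ((hΔ _ _).abs.const_mul R)
  have step4 : ∫ y in (z-1)..(z+1), R * |Δ y| = 2 * R * ∫ x in (0:ℝ)..1, |Δ x| := by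
    rw [intervalIntegral.integral_const_mul]
    have hp := per_shift_integral (g := fun y => |Δ y|) hΔper z
    have he := even_split_integral (g := fun y => |Δ y|) hΔeven (fun a b => (hΔ a b).abs)
    rw [hp, he]
    ring
  calc |G R M ρ₁ ρr z - G R M ρ₂ ρr z| = |∫ y in (z-R)..(z+R), (z-y) * Δ y| := by rw [hsub]
    _ ≤ ∫ y in (z-R)..(z+R), |(z-y) * Δ y| := step1
    _ ≤ ∫ y in (z-R)..(z+R), R * |Δ y| := step2
    _ ≤ ∫ y in (z-1)..(z+1), R * |Δ y| := step3
    _ = 2 * R * ∫ x in (0:ℝ)..1, |Δ x| := step4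

set_option maxHeartbeats 2000000 in
theorem stmt_15 (R M σ : ℝ) (hR : 0 < R) (hR1 : R ≤ 1) (hM : 0 ≤ M)
    (ρr : ℝ → ℝ) (hρr : IsEvenPeriodicDensity ρr)
    (hσ : σ ^ 2 > 16 * R / Real.log 3)
    (ρ₁ ρ₂ : ℝ → ℝ)
    (hρ₁ : IsEvenPeriodicDensity ρ₁) (hρ₂ : IsEvenPeriodicDensity ρ₂)
    (hfix₁ : ∀ x ∈ Set.Icc (0:ℝ) 1, Tmap R M σ ρr ρ₁ x = ρ₁ x)
    (hfix₂ : ∀ x ∈ Set.Icc (0:ℝ) 1, Tmap R M σ ρr ρ₂ x = ρ₂ x) :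
    ∀ᵐ x ∂(volume.restrict (Set.Icc (0:ℝ) 1)), ρ₁ x = ρ₂ x := by
  have h₁ := epd_intervalIntegrable hρ₁
  have h₂ := epd_intervalIntegrable hρ₂
  have hr := epd_intervalIntegrable hρr
  have hlog3 : 0 < Real.log 3 := Real.log_pos (by norm_num)
  have hσ2 : 0 < σ ^ 2 := lt_trans (div_pos (by positivity) hlog3) hσ
  set c : ℝ := 2 / σ ^ 2 with hcdef
  have hc : 0 < c := by positivity
  set δ : ℝ := ∫ x in (0:ℝ)..1, |ρ₁ x - ρ₂ x| with hδdef
  have hδ0 : 0 ≤ δ :=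
    intervalIntegral.integral_nonneg zero_le_one (fun u _ => abs_nonneg _)
  set F₁ : ℝ → ℝ := fun x => ∫ z in (0:ℝ)..x, G R M ρ₁ ρr z with hF₁def
  set F₂ : ℝ → ℝ := fun x => ∫ z in (0:ℝ)..x, G R M ρ₂ ρr z with hF₂def
  have hG₁cont : Continuous (G R M ρ₁ ρr) := G_continuous R M ρ₁ ρr h₁ hr
  have hG₂cont : Continuous (G R M ρ₂ ρr) := G_continuous R M ρ₂ ρr h₂ hr
  have hF₁cont : Continuous F₁ :=
    intervalIntegral.continuous_primitive (fun a b => hG₁cont.intervalIntegrable a b) 0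
  have hF₂cont : Continuous F₂ :=
    intervalIntegral.continuous_primitive (fun a b => hG₂cont.intervalIntegrable a b) 0
  -- bound on |F₁ - F₂| on [0,1]
  have hFdiff : ∀ x ∈ Set.Icc (0:ℝ) 1, |F₁ x - F₂ x| ≤ 2 * R * δ := by
    intro x hx
    have hsub : F₁ x - F₂ x = ∫ z in (0:ℝ)..x, (G R M ρ₁ ρr z - G R M ρ₂ ρr z) := by
      simp only [hF₁def, hF₂def]
      rw [intervalIntegral.integral_sub (hG₁cont.intervalIntegrable 0 x)
        (hG₂cont.intervalIntegrable 0 x)]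
    rw [hsub]
    calc |∫ z in (0:ℝ)..x, (G R M ρ₁ ρr z - G R M ρ₂ ρr z)|
        ≤ ∫ z in (0:ℝ)..x, |G R M ρ₁ ρr z - G R M ρ₂ ρr z| :=
          intervalIntegral.abs_integral_le_integral_abs hx.1
      _ ≤ ∫ z in (0:ℝ)..x, 2 * R * δ := by
          apply intervalIntegral.integral_mono_on hx.1
            ((hG₁cont.sub hG₂cont).abs.intervalIntegrable 0 x) intervalIntegrable_const
          intro z _
          exact G_sub_bound R M hR hR1 ρ₁ ρ₂ ρr hρ₁ hρ₂ hρr z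
      _ = 2 * R * δ * x := by
          rw [intervalIntegral.integral_const, smul_eq_mul]
          ring
      _ ≤ 2 * R * δ := by
          nlinarith [mul_nonneg (mul_nonneg (mul_nonneg (by norm_num : (0:ℝ) ≤ 2) hR.le) hδ0)
            (sub_nonneg.mpr hx.2)]
  set a : ℝ := c * (2 * R * δ) with hadef
  have ha0 : 0 ≤ a := by positivity
  -- E and K
  set E₁ : ℝ → ℝ := fun x => Real.exp (-c * F₁ x) with hE₁def
  set E₂ : ℝ → ℝ := fun x => Real.exp (-c * F₂ x) with hE₂def
  have hE₁cont : Continuous E₁ := Real.continuous_exp.comp (continuous_const.mul hF₁cont)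
  have hE₂cont : Continuous E₂ := Real.continuous_exp.comp (continuous_const.mul hF₂cont)
  set K₁ : ℝ := ∫ y in (0:ℝ)..1, E₁ y with hK₁def
  set K₂ : ℝ := ∫ y in (0:ℝ)..1, E₂ y with hK₂def
  have hK₁pos : 0 < K₁ :=
    intervalIntegral.intervalIntegral_pos_of_pos (hE₁cont.intervalIntegrable 0 1)
      (fun x => Real.exp_pos _) zero_lt_one
  have hK₂pos : 0 < K₂ :=
    intervalIntegral.intervalIntegral_pos_of_pos (hE₂cont.intervalIntegrable 0 1)
      (fun x => Real.exp_pos _) zero_lt_one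
  have hval₁ : ∀ x ∈ Set.Icc (0:ℝ) 1, ρ₁ x = E₁ x / K₁ := by
    intro x hx
    rw [← hfix₁ x hx]
    simp only [Tmap, hE₁def, hK₁def, hF₁def, hcdef]
  have hval₂ : ∀ x ∈ Set.Icc (0:ℝ) 1, ρ₂ x = E₂ x / K₂ := by
    intro x hx
    rw [← hfix₂ x hx]
    simp only [Tmap, hE₂def, hK₂def, hF₂def, hcdef]
  -- pointwise exponential comparisons
  have hE12 : ∀ x ∈ Set.Icc (0:ℝ) 1, E₁ x ≤ Real.exp a * E₂ x := by
    intro x hx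
    rw [hE₁def, hE₂def, ← Real.exp_add]
    apply Real.exp_le_exp.mpr
    have h := hFdiff x hx
    have h' := abs_le.mp h
    nlinarith [hc, h'.1, h'.2]
  have hE21 : ∀ x ∈ Set.Icc (0:ℝ) 1, E₂ x ≤ Real.exp a * E₁ x := by
    intro x hx
    rw [hE₁def, hE₂def, ← Real.exp_add]
    apply Real.exp_le_exp.mpr
    have h := hFdiff x hx
    have h' := abs_le.mp h
    nlinarith [hc, h'.1, h'.2]
  have hK12 : K₁ ≤ Real.exp a * K₂ := by
    rw [hK₁def, hK₂def, ← intervalIntegral.integral_const_mul]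
    exact intervalIntegral.integral_mono_on zero_le_one (hE₁cont.intervalIntegrable 0 1)
      ((hE₂cont.intervalIntegrable 0 1).const_mul _) hE12
  have hK21 : K₂ ≤ Real.exp a * K₁ := by
    rw [hK₁def, hK₂def, ← intervalIntegral.integral_const_mul]
    exact intervalIntegral.integral_mono_on zero_le_one (hE₂cont.intervalIntegrable 0 1)
      ((hE₁cont.intervalIntegrable 0 1).const_mul _) hE21
  -- ratio bound on densities
  have hexpa : (1:ℝ) ≤ Real.exp a := Real.one_le_exp ha0
  have hratio12 : ∀ x ∈ Set.Icc (0:ℝ) 1, ρ₁ x ≤ Real.exp (2*a) * ρ₂ x := by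
    intro x hx
    rw [hval₁ x hx, hval₂ x hx, div_le_iff₀ hK₁pos]
    have e1 := hE12 x hx
    have e2 := hK21
    have hE₂pos : 0 < E₂ x := Real.exp_pos _
    have h2a : Real.exp (2*a) = Real.exp a * Real.exp a := by
      rw [← Real.exp_add]; ring_nf
    rw [h2a]
    have : E₁ x * K₂ ≤ (Real.exp a * E₂ x) * (Real.exp a * K₁) := by
      apply mul_le_mul e1 e2 hK₂pos.le
      positivity
    calc E₁ x = (E₁ x * K₂) / K₂ := by field_simp
      _ ≤ ((Real.exp a * E₂ x) * (Real.exp a * K₁)) / K₂ := by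
          apply div_le_div_of_nonneg_right this hK₂pos.le
      _ = Real.exp a * Real.exp a * (E₂ x / K₂) * K₁ := by field_simp
  have hratio21 : ∀ x ∈ Set.Icc (0:ℝ) 1, ρ₂ x ≤ Real.exp (2*a) * ρ₁ x := by
    intro x hx
    rw [hval₁ x hx, hval₂ x hx, div_le_iff₀ hK₂pos]
    have e1 := hE21 x hx
    have e2 := hK12
    have hE₁pos : 0 < E₁ x := Real.exp_pos _
    have h2a : Real.exp (2*a) = Real.exp a * Real.exp a := by
      rw [← Real.exp_add]; ring_nf
    rw [h2a]
    have : E₂ x * K₁ ≤ (Real.exp a * E₁ x) * (Real.exp a * K₂) := by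
      apply mul_le_mul e1 e2 hK₁pos.le
      positivity
    calc E₂ x = (E₂ x * K₁) / K₁ := by field_simp
      _ ≤ ((Real.exp a * E₁ x) * (Real.exp a * K₂)) / K₁ := by
          apply div_le_div_of_nonneg_right this hK₁pos.le
      _ = Real.exp a * Real.exp a * (E₁ x / K₁) * K₂ := by field_simp
  -- pointwise bound on |ρ₁ - ρ₂|
  have habs : ∀ x ∈ Set.Icc (0:ℝ) 1, |ρ₁ x - ρ₂ x| ≤ (Real.exp (2*a) - 1) * ρ₂ x := by
    intro x hx
    set t : ℝ := Real.exp (2*a) with htdef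
    have ht1 : (1:ℝ) ≤ t := Real.one_le_exp (by linarith)
    have hp1 : 0 ≤ ρ₁ x := hρ₁.2.2.1 x
    have hp2 : 0 ≤ ρ₂ x := hρ₂.2.2.1 x
    have hb12 := hratio12 x hx
    have hb21 := hratio21 x hx
    rw [abs_le]
    constructor
    · rcases le_or_gt t 2 with h2 | h2
      · nlinarith [mul_le_mul_of_nonneg_left hb21 (sub_nonneg.mpr h2), sq_nonneg (t-1)]
      · nlinarith
    · nlinarith
  -- integrate
  have hδle : δ ≤ Real.exp (2*a) - 1 := by
    have hmono : δ ≤ ∫ x in (0:ℝ)..1, (Real.exp (2*a) - 1) * ρ₂ x := by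
      rw [hδdef]
      exact intervalIntegral.integral_mono_on zero_le_one ((h₁ 0 1).sub (h₂ 0 1)).abs
        ((h₂ 0 1).const_mul _) habs
    rw [intervalIntegral.integral_const_mul, hρ₂.2.2.2] at hmono
    linarith
  have hδ2 : δ ≤ 2 := by
    have hmono : δ ≤ ∫ x in (0:ℝ)..1, (ρ₁ x + ρ₂ x) := by
      rw [hδdef]
      apply intervalIntegral.integral_mono_on zero_le_one ((h₁ 0 1).sub (h₂ 0 1)).abs
        ((h₁ 0 1).add (h₂ 0 1))
      intro x _
      have hp1 := hρ₁.2.2.1 x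
      have hp2 := hρ₂.2.2.1 x
      rw [abs_le]
      constructor <;> linarith
    rw [intervalIntegral.integral_add (h₁ 0 1) (h₂ 0 1), hρ₁.2.2.2, hρ₂.2.2.2] at hmono
    linarith
  -- conclude δ = 0
  have hB : Real.exp (16 * R / σ ^ 2) < 3 := by
    have h1 : 16 * R < σ ^ 2 * Real.log 3 := (div_lt_iff₀ hlog3).mp hσ
    have h16 : 16 * R / σ ^ 2 < Real.log 3 := by
      rw [div_lt_iff₀ hσ2]
      nlinarith [h1]
    calc Real.exp (16 * R / σ ^ 2) < Real.exp (Real.log 3) := Real.exp_lt_exp.mpr h16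
      _ = 3 := Real.exp_log (by norm_num)
  have hδzero : δ = 0 := by
    by_contra hne
    have hδpos : 0 < δ := lt_of_le_of_ne hδ0 (Ne.symm hne)
    have hσ0 : σ ≠ 0 := by
      intro h
      rw [h] at hσ2
      simp at hσ2
    have h2a_eq : 2 * a = (1 - δ/2) * 0 + (δ/2) * (16 * R / σ ^ 2) := by
      rw [hadef, hcdef]
      field_simp
      ring
    have hconv := convexOn_exp.2 (Set.mem_univ (0:ℝ)) (Set.mem_univ (16 * R / σ ^ 2))
      (by linarith : (0:ℝ) ≤ 1 - δ/2) (by linarith : (0:ℝ) ≤ δ/2) (by ring)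
    simp only [smul_eq_mul, Real.exp_zero, mul_one] at hconv
    rw [← h2a_eq] at hconv
    have hstrict : (δ/2) * Real.exp (16 * R / σ ^ 2) < (δ/2) * 3 :=
      mul_lt_mul_of_pos_left hB (by linarith)
    have : Real.exp (2*a) < 1 + δ := by
      calc Real.exp (2*a) ≤ (1 - δ/2) + (δ/2) * Real.exp (16 * R / σ ^ 2) := hconv
        _ < (1 - δ/2) + (δ/2) * 3 := by linarith
        _ = 1 + δ := by ring
    linarith
  -- from δ = 0 conclude a.e. equality
  have hioc : (fun x => |ρ₁ x - ρ₂ x|) =ᵐ[volume.restrict (Set.Ioc (0:ℝ) 1)] 0 := by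
    have hint : IntegrableOn (fun x => |ρ₁ x - ρ₂ x|) (Set.Ioc (0:ℝ) 1) volume :=
      ((h₁ 0 1).sub (h₂ 0 1)).abs.1
    have h0 : ∫ x in Set.Ioc (0:ℝ) 1, |ρ₁ x - ρ₂ x| = 0 := by
      have := hδdef
      rw [intervalIntegral.integral_of_le zero_le_one] at this
      rw [← this, hδzero]
    exact (MeasureTheory.integral_eq_zero_iff_of_nonneg
      (fun x => abs_nonneg _) hint).mp h0
  have hres : volume.restrict (Set.Icc (0:ℝ) 1) = volume.restrict (Set.Ioc (0:ℝ) 1) := by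
    exact (Measure.restrict_congr_set MeasureTheory.Ioc_ae_eq_Icc).symm
  rw [hres]
  filter_upwards [hioc] with x hx
  have : |ρ₁ x - ρ₂ x| = 0 := hx
  have := abs_eq_zero.mp this
  linarith [this]
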